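/- Suppose L_1, L_2 are Legendrian knots such that S_+(L_1) and L_2 have distinct positive transverse pushoffs (i.e., no number of negative stabilizations makes them isotopic). If also S_-^2(L_1) = S_-(-L_2), then S_-(L_2) and S_+(-L_2) are not Legendrian isotopic. -/
import Mathlib

/-- Abstract Legendrian-knot setup as in the `m(10_145)` analysis: if `S_+(L₁)`
and `L₂` have distinct positive transverse pushoffs (no number of negative
stabilizations makes them isotopic), and `S_-²(L₁) ≈ S_-(-L₂)`, then `S_-(L₂)`
and `S_+(-L₂)` are not Legendrian isotopic. -/
theorem sneg_L2_ne_spos_negL2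
    (K : Type*) (iso : K → K → Prop) (hiso : Equivalence iso)
    (Sp Sn neg : K → K)
    (hSp_cong : ∀ L L', iso L L' → iso (Sp L) (Sp L'))
    (hSn_cong : ∀ L L', iso L L' → iso (Sn L) (Sn L'))
    (hneg_cong : ∀ L L', iso L L' → iso (neg L) (neg L'))
    (hcomm : ∀ L, iso (Sp (Sn L)) (Sn (Sp L)))
    (hint₁ : ∀ L, iso (neg (Sp L)) (Sn (neg L)))
    (hint₂ : ∀ L, iso (neg (Sn L)) (Sp (neg L)))
    (L₁ L₂ : K)
    (hdistinct : ∀ k : ℕ, ¬ iso (Sn^[k] (Sp L₁)) (Sn^[k] L₂))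
    (hrel : iso (Sn (Sn L₁)) (Sn (neg L₂))) :
    ¬ iso (Sn L₂) (Sp (neg L₂)) := by
  intro h
  apply hdistinct 2
  simp only [Function.iterate_succ, Function.iterate_zero, Function.comp_apply, id_eq]
  -- goal: iso (Sn (Sn (Sp L₁))) (Sn (Sn L₂))
  have h1 : iso (Sn (Sn L₂)) (Sn (Sp (neg L₂))) := hSn_cong _ _ h
  have h2 : iso (Sn (Sp (neg L₂))) (Sp (Sn (neg L₂))) := hiso.symm (hcomm _)
  have h3 : iso (Sp (Sn (neg L₂))) (Sp (Sn (Sn L₁))) :=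
    hSp_cong _ _ (hiso.symm hrel)
  have h4 : iso (Sp (Sn (Sn L₁))) (Sn (Sp (Sn L₁))) := hcomm _
  have h5 : iso (Sn (Sp (Sn L₁))) (Sn (Sn (Sp L₁))) := hSn_cong _ _ (hcomm _)
  exact hiso.symm (hiso.trans (hiso.trans (hiso.trans (hiso.trans h1 h2) h3) h4) h5)
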